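/- arXiv:1404.0853 — 5 statements merged into one kernel-verified Lean document; each statement's English description precedes it below -/
import Mathlib

section
/- The subClass relation is preserved by bind: for all models M1, M2, classes c1, c2 and objects o1, o2, if subClass(c1, c2, M1) and subClass(c1, c2, M2) both hold, then subClass(c1, c2, bind(o1, o2, M1, M2)) holds. -/
attribute [local instance] Classical.propDecidable

abbrev Obj := ℕ
abbrev Cls := ℕ
abbrev Ref := ℕ

abbrev Vertex := Obj × Cls
abbrev Edge := Vertex × Ref × Vertex
/-- A model: finite set of typed object vertices and finite set of typed reference edges. -/
abbrev Model := Finset Vertex × Finset Edge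
/-- A metamodel: finite set of classes and finite set of (class, reference, class) triples. -/
abbrev MetaModel := Finset Cls × Finset (Cls × Ref × Cls)

/-- The distinguished inheritance reference label. -/
def inh : Ref := 0

def InstanceOf (M : Model) (MM : MetaModel) : Prop :=
  (∀ v ∈ M.1, v.2 ∈ MM.1) ∧
  (∀ e ∈ M.2, (e.1.2, e.2.1, e.2.2.2) ∈ MM.2)

/-- Rename object label o1 to o2. -/
def ren (o1 o2 o : Obj) : Obj := if o = o1 then o2 else o
def mapv (o1 o2 : Obj) (v : Vertex) : Vertex := (ren o1 o2 v.1, v.2)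
def mape (o1 o2 : Obj) (e : Edge) : Edge :=
  (mapv o1 o2 e.1, e.2.1, mapv o1 o2 e.2.2)

/-- bind on object labels: if o1 occurs in M1, o2 occurs in M2 with the same type,
    return the union of M1 (with o1 renamed to o2) and M2; else return M1. -/
noncomputable def bind (o1 o2 : Obj) (M1 M2 : Model) : Model :=
  if ∃ c, (o1, c) ∈ M1.1 ∧ (o2, c) ∈ M2.1 then
    (M1.1.image (mapv o1 o2) ∪ M2.1, M1.2.image (mape o1 o2) ∪ M2.2)
  else M1

/-- bind on typed elements (o1,c1), (o2,c2). -/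
noncomputable def bindT (v1 v2 : Vertex) (M1 M2 : Model) : Model :=
  if v1 ∈ M1.1 ∧ v2 ∈ M2.1 ∧ v1.2 = v2.2 then
    (M1.1.image (mapv v1.1 v2.1) ∪ M2.1, M1.2.image (mape v1.1 v2.1) ∪ M2.2)
  else M1

def subClass (c1 c2 : Cls) (M : Model) : Prop :=
  ∀ o : Obj, (o, c2) ∈ M.1 → (((o, c2), inh, (o, c1)) : Edge) ∈ M.2

def isAbstract (c : Cls) (M : Model) : Prop :=
  ∀ o : Obj, (o, c) ∈ M.1 → ∃ c2 : Cls, (((o, c2), inh, (o, c)) : Edge) ∈ M.2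

def isOpposite (r1 r2 : Ref) (M : Model) : Prop :=
  ∀ m1 ∈ M.1, ∀ m2 ∈ M.1,
    (((m1, r1, m2) : Edge) ∈ M.2 ↔ ((m2, r2, m1) : Edge) ∈ M.2)

noncomputable def lower (c : Cls) (r : Ref) (n : ℕ) (M : Model) : Prop :=
  ∀ o : Obj, (o, c) ∈ M.1 →
    n ≤ (M.1.filter (fun m2 => (((o, c), r, m2) : Edge) ∈ M.2)).card

noncomputable def upper (c : Cls) (r : Ref) (n : ℕ) (M : Model) : Prop :=
  ∀ o : Obj, (o, c) ∈ M.1 →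
    (M.1.filter (fun m2 => (((o, c), r, m2) : Edge) ∈ M.2)).card ≤ n

noncomputable def areComposite (c : Cls) (R : Finset Ref) (M : Model) : Prop :=
  ∀ o : Obj,
    (M.1.filter (fun m1 => ∃ r ∈ R, ((m1, r, (o, c)) : Edge) ∈ M.2)).card ≤ 1

/-- Image of a model under a map on typed vertices. -/
def mapeF (f : Vertex → Vertex) (e : Edge) : Edge := (f e.1, e.2.1, f e.2.2)
def imageModel (f : Vertex → Vertex) (M : Model) : Model :=
  (M.1.image f, M.2.image (mapeF f))
/-- Class-preserving renaming induced by a map on object labels. -/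
def renameModel (f : Obj → Obj) (M : Model) : Model :=
  imageModel (fun v => (f v.1, v.2)) M

theorem BindSubClassPreserved (M1 M2 : Model) (c1 c2 : Cls) (o1 o2 : Obj)
    (h1 : subClass c1 c2 M1) (h2 : subClass c1 c2 M2) :
    subClass c1 c2 (bind o1 o2 M1 M2) := by
  unfold _root_.bind
  split
  · intro o ho
    simp only [Finset.mem_union, Finset.mem_image] at ho ⊢
    rcases ho with ⟨v, hv, hmap⟩ | hv
    · left
      refine ⟨((v.1, c2), inh, (v.1, c1)), ?_, ?_⟩
      · have : v = (v.1, c2) := by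
          cases v; simp [mapv] at hmap; simp [hmap.2]
        exact h1 v.1 (this ▸ hv)
      · cases v
        simp [mapv] at hmap
        simp [mape, mapv, hmap.1, hmap.2]
    · right; exact h2 o hv
  · exact h1
end

section
/- Abstractness is preserved by bind: for all models M1, M2, class c and objects o1, o2, if isAbstract(c, M1) and isAbstract(c, M2) hold, then isAbstract(c, bind(o1, o2, M1, M2)) holds. -/
attribute [local instance] Classical.propDecidable

theorem BindIsAbstractPreserved (M1 M2 : Model) (c : Cls) (o1 o2 : Obj)
    (h1 : isAbstract c M1) (h2 : isAbstract c M2) :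
    isAbstract c (bind o1 o2 M1 M2) := by
  unfold _root_.bind
  split
  · intro o ho
    rcases Finset.mem_union.mp ho with h | h
    · rcases Finset.mem_image.mp h with ⟨v, hv, hveq⟩
      have hc : v.2 = c := congrArg Prod.snd hveq
      have hv' : (v.1, c) ∈ M1.1 := by
        rw [← hc]; exact hv
      obtain ⟨c2, hc2⟩ := h1 v.1 hv'
      refine ⟨c2, Finset.mem_union.mpr (Or.inl (Finset.mem_image.mpr ⟨_, hc2, ?_⟩))⟩
      have ho' : ren o1 o2 v.1 = o := congrArg Prod.fst hveq
      simp [mape, mapv, ho']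
    · obtain ⟨c2, hc2⟩ := h2 o h
      exact ⟨c2, Finset.mem_union.mpr (Or.inr hc2)⟩
  · exact h1
end

section
/- Lower multiplicity bounds are preserved by bind under preconditions: for all models (MV1,ME1), (MV2,ME2), class c, reference r, bound n, and typed elements (o1,c1), (o2,c2), if c1 = c2, o2 does not occur (under any class) in MV1, the renaming performed by bind is injective on vertices, and lower(c, r, n) holds in both models, then lower(c, r, n) holds in bind((o1,c1),(o2,c2),(MV1,ME1),(MV2,ME2)). -/
attribute [local instance] Classical.propDecidable

theorem BindLowerPreserved (MV1 MV2 : Finset Vertex) (ME1 ME2 : Finset Edge) (c : Cls) (r : Ref) (n : ℕ)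
    (o1 o2 : Obj) (c1 c2 : Cls)
    (htype : c1 = c2)
    (hfresh : ∀ c', (o2, c') ∉ MV1)
    (hinj : Set.InjOn (mapv o1 o2) (↑MV1 : Set Vertex))
    (h1 : lower c r n ((MV1, ME1) : Model))
    (h2 : lower c r n ((MV2, ME2) : Model)) :
    lower c r n (bindT (o1, c1) (o2, c2) (MV1, ME1) (MV2, ME2)) := by
  unfold bindT
  split
  case isFalse => exact h1
  case isTrue h =>
    dsimp only
    intro o ho
    simp only [Finset.mem_union] at ho
    rcases ho with ho | ho
    · -- o comes from MV1 via renaming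
      rcases Finset.mem_image.mp ho with ⟨⟨o', c'⟩, hm, heq⟩
      have hc : c' = c := by simpa [mapv] using congrArg Prod.snd heq
      rw [hc] at hm
      have hoe : ren o1 o2 o' = o := by simpa [mapv] using congrArg Prod.fst heq
      have hcard := h1 o' hm
      have hsub : (MV1.filter (fun m2 => (((o', c), r, m2) : Edge) ∈ ME1)).image (mapv o1 o2) ⊆
          (MV1.image (mapv o1 o2) ∪ MV2).filter
            (fun m2 => (((o, c), r, m2) : Edge) ∈ ME1.image (mape o1 o2) ∪ ME2) := by
        intro m2 hm2
        rcases Finset.mem_image.mp hm2 with ⟨m2', hm2', rfl⟩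
        rcases Finset.mem_filter.mp hm2' with ⟨hmem, hedge⟩
        refine Finset.mem_filter.mpr ⟨Finset.mem_union_left _ (Finset.mem_image_of_mem _ hmem), ?_⟩
        refine Finset.mem_union_left _ ?_
        have : mape o1 o2 (((o', c), r, m2') : Edge) ∈ ME1.image (mape o1 o2) :=
          Finset.mem_image_of_mem _ hedge
        simpa [mape, mapv, hoe] using this
      have hcardeq : ((MV1.filter (fun m2 => (((o', c), r, m2) : Edge) ∈ ME1)).image
          (mapv o1 o2)).card = (MV1.filter (fun m2 => (((o', c), r, m2) : Edge) ∈ ME1)).card := by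
        apply Finset.card_image_of_injOn
        intro a ha b hb hab
        exact hinj (Finset.mem_coe.mpr (Finset.mem_of_mem_filter a ha))
          (Finset.mem_coe.mpr (Finset.mem_of_mem_filter b hb)) hab
      calc n ≤ _ := hcard
        _ = _ := hcardeq.symm
        _ ≤ _ := Finset.card_le_card hsub
    · -- o from MV2
      have hcard := h2 o ho
      have hsub : MV2.filter (fun m2 => (((o, c), r, m2) : Edge) ∈ ME2) ⊆
          (MV1.image (mapv o1 o2) ∪ MV2).filter
            (fun m2 => (((o, c), r, m2) : Edge) ∈ ME1.image (mape o1 o2) ∪ ME2) := by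
        intro m2 hm2
        rcases Finset.mem_filter.mp hm2 with ⟨hmem, hedge⟩
        exact Finset.mem_filter.mpr ⟨Finset.mem_union_right _ hmem, Finset.mem_union_right _ hedge⟩
      exact hcard.trans (Finset.card_le_card hsub)
end

section
/- Multi-point bind preserves instance-of: given models M1, M2 instance of a metamodel MM and a list l of pairs of objects such that each pair consists of a hook of M1 and a prototype of M2 of the same type, the model Bind2MSH(M1, M2, l), obtained by successively applying bind for each pair in l, is an instance of MM. -/
attribute [local instance] Classical.propDecidable

noncomputable def Bind2MSH (M1 M2 : Model) (l : List (Obj × Obj)) : Model :=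
  l.foldl (fun M p => bind p.1 p.2 M M2) M1

lemma bind_instance (o1 o2 : Obj) (M1 M2 : Model) (MM : MetaModel)
    (h1 : InstanceOf M1 MM) (h2 : InstanceOf M2 MM) :
    InstanceOf (bind o1 o2 M1 M2) MM := by
  unfold _root_.bind
  split
  · constructor
    · intro v hv
      simp only [Finset.mem_union, Finset.mem_image] at hv
      rcases hv with ⟨w, hw, rfl⟩ | hv
      · exact h1.1 w hw
      · exact h2.1 v hv
    · intro e he
      simp only [Finset.mem_union, Finset.mem_image] at he
      rcases he with ⟨f, hf, rfl⟩ | he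
      · exact h1.2 f hf
      · exact h2.2 e he
  · exact h1

theorem ValidBind2MSH (M1 M2 : Model) (MM : MetaModel) (l : List (Obj × Obj))
    (h1 : InstanceOf M1 MM) (h2 : InstanceOf M2 MM)
    (hl : ∀ p ∈ l, ∃ c : Cls, (p.1, c) ∈ M1.1 ∧ (p.2, c) ∈ M2.1) :
    InstanceOf (Bind2MSH M1 M2 l) MM := by
  clear hl
  unfold Bind2MSH
  induction l generalizing M1 with
  | nil => exact h1
  | cons p t ih => exact ih _ (bind_instance p.1 p.2 M1 M2 MM h1 h2)
end

section
/- Counterexample to naive substitution: there exist a model M satisfying subClass(c1, c2) (with some object o typed by both c2 and, via inheritance, by c1) and a replacement operation that substitutes the single vertex (o, c2) by a fresh vertex (o', c2) without renaming the vertex (o, c1), such that the resulting model does not satisfy subClass(c1, c2). -/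
attribute [local instance] Classical.propDecidable

/-- Naive substitution of a single typed vertex v by v', redirecting incident edges,
    leaving other vertices (even with the same object label) unchanged. -/
def naiveSubst (v v' : Vertex) (M : Model) : Model :=
  imageModel (fun w => if w = v then v' else w) M

theorem NaiveSubstBreaksSubClass :
    ∃ (c1 c2 : Cls) (o o' : Obj) (M : Model),
      subClass c1 c2 M ∧
      (o, c2) ∈ M.1 ∧ (o, c1) ∈ M.1 ∧
      (∀ c : Cls, (o', c) ∉ M.1) ∧
      ¬ subClass c1 c2 (naiveSubst (o, c2) (o', c2) M) := by
  refine ⟨1, 2, 0, 1, ({(0,2),(0,1)}, {((0,2),inh,(0,1))}), ?_, ?_, ?_, ?_, ?_⟩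
  · intro o ho
    simp only [Finset.mem_insert, Finset.mem_singleton, Prod.mk.injEq] at ho
    have : o = 0 := by
      rcases ho with h | h
      · exact h.1
      · exact absurd h.2 (by norm_num)
    subst this; simp
  · simp
  · simp
  · intro c; simp [Prod.ext_iff]
  · intro h
    have h1 : ((1 : Obj), (2 : Cls)) ∈ (naiveSubst (0,2) (1,2) ({(0,2),(0,1)}, {((0,2),inh,(0,1))})).1 := by
      simp [naiveSubst, imageModel]
    have := h 1 h1
    simp [naiveSubst, imageModel, mapeF, inh, Prod.ext_iff] at this
end
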